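/- arXiv:1712.03758 — 3 statements merged into one kernel-verified Lean document; each statement's English description precedes it below -/
import Mathlib

section
/- Cyclicity of the three-distance ordering: with the recursively defined sequence n_0 = 0, n_{i+1} = n_i + Δ_i from the three distance theorem extended to all i ≥ 0, one has n_{N+1} = 0, and more generally n_i = n_j if and only if i ≡ j (mod N+1). -/
/-!
With `P = q k` and `Q = q (k - 1) + r * q k`, the increments are `P, -Q, P - Q` for even `k`; for
odd `k` they are their negatives, and the reflection `m ↦ N - m` brings us back to the even case.
Since `Q ≤ N < P + Q` (because `0 ≤ s < q k`), the step maps `[0, N]` injectively into itself, so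
it permutes `[0, N]`. On any invariant subset `S` the increments sum to zero, which gives
`P * #{m ∈ S | m < Q} = Q * #{m ∈ S | N - P < m}`; as `P` and `Q` are coprime (consecutive
continuants are), the first set has `Q` elements and the second `P`, so together they fill `[0, N]`.
Hence the orbit of `0` is all of `[0, N]`, i.e. it has minimal period `N + 1`.
-/

open Function Set

namespace Function

variable {α : Type*} {f : α → α} {x : α}

theorem iterate_eq_iterate_iff_modEq_minimalPeriod (hx : x ∈ periodicPts f) {m n : ℕ} :
    f^[m] x = f^[n] x ↔ m ≡ n [MOD minimalPeriod f x] := by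
  have hpos := minimalPeriod_pos_of_mem_periodicPts hx
  rw [← iterate_mod_minimalPeriod_eq (n := m), ← iterate_mod_minimalPeriod_eq (n := n),
    iterate_eq_iterate_iff_of_lt_minimalPeriod (Nat.mod_lt _ hpos) (Nat.mod_lt _ hpos)]
  rfl

theorem _root_.Set.MapsTo.mem_periodicPts_of_injOn {s : Set α} (hs : s.Finite)
    (hmaps : MapsTo f s s) (hinj : InjOn f s) (hx : x ∈ s) : x ∈ periodicPts f := by
  have : Finite s := hs.to_subtype
  obtain ⟨n, hn, hper⟩ := (hmaps.restrict_inj.mpr hinj).mem_periodicPts ⟨x, hx⟩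
  refine ⟨n, hn, ?_⟩
  simpa [IsPeriodicPt, IsFixedPt, Subtype.ext_iff, hmaps.coe_iterate_restrict] using hper

theorem minimalPeriod_eq_card_of_minimal [DecidableEq α] {s : Finset α} (hx : x ∈ s)
    (hmaps : MapsTo f s s) (hinj : InjOn f s)
    (hmin : ∀ t ⊆ s, t.Nonempty → MapsTo f t t → t = s) :
    minimalPeriod f x = s.card := by
  have hper := hmaps.mem_periodicPts_of_injOn s.finite_toSet hinj hx
  have hpos := minimalPeriod_pos_of_mem_periodicPts hper
  set orbit := (Finset.range (minimalPeriod f x)).image (f^[·] x)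
  have horbit : orbit = s := by
    refine hmin orbit ?_ ⟨x, Finset.mem_image.mpr ⟨0, Finset.mem_range.mpr hpos, rfl⟩⟩ ?_
    · rintro _ hy
      obtain ⟨i, -, rfl⟩ := Finset.mem_image.mp hy
      exact hmaps.iterate i hx
    · rintro _ hy
      obtain ⟨i, hi, rfl⟩ := Finset.mem_image.mp (Finset.mem_coe.mp hy)
      refine Finset.mem_image.mpr ⟨(i + 1) % minimalPeriod f x,
        Finset.mem_range.mpr (Nat.mod_lt _ hpos), ?_⟩
      rw [iterate_mod_minimalPeriod_eq, iterate_succ_apply']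
  rw [← horbit, Finset.card_image_of_injOn, Finset.card_range]
  simpa using iterate_injOn_Iio_minimalPeriod (f := f) (x := x)

theorem eq_iterate_of_forall_succ {u : ℕ → α} (h : ∀ i, u (i + 1) = f (u i)) (i : ℕ) :
    u i = f^[i] (u 0) := by
  induction i with
  | zero => rfl
  | succ i ih => rw [h, ih, iterate_succ_apply']

end Function

section Continuant

variable {a q : ℤ → ℤ}

theorem isCoprime_continuant_pred (hq0 : q 0 = 1)
    (hqrec : ∀ k : ℤ, 0 ≤ k → q (k + 1) = a (k + 1) * q k + q (k - 1)) (j : ℕ) :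
    IsCoprime (q j) (q (j - 1)) := by
  induction j with
  | zero => simpa [hq0] using isCoprime_one_left
  | succ j ih =>
    push_cast
    rw [add_sub_cancel_right, hqrec j j.cast_nonneg, add_comm]
    exact ih.symm.add_mul_right_left _

theorem continuant_nonneg (hqm : q (-1) = 0) (hq0 : q 0 = 1)
    (hqrec : ∀ k : ℤ, 0 ≤ k → q (k + 1) = a (k + 1) * q k + q (k - 1))
    (ha : ∀ j : ℕ, 0 ≤ a (j + 1)) (j : ℕ) : 0 ≤ q (j - 1) ∧ 0 ≤ q j := by
  induction j with
  | zero => simp [hqm, hq0]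
  | succ j ih =>
    push_cast
    rw [add_sub_cancel_right, hqrec j j.cast_nonneg]
    exact ⟨ih.2, add_nonneg (mul_nonneg (ha j) ih.2) ih.1⟩

end Continuant

def threeGapStep (N a b c m : ℤ) : ℤ :=
  m + if 0 ≤ m + a ∧ m + a ≤ N then a else if 0 ≤ m + b ∧ m + b ≤ N then b else c

theorem sub_threeGapStep (N a b c m : ℤ) :
    N - threeGapStep N a b c m = threeGapStep N (-a) (-b) (-c) (N - m) := by
  unfold threeGapStep
  split_ifs <;> omega

section ThreeGap

variable {N P Q : ℤ}

theorem threeGapStep_mapsTo (hPN : P ≤ N) (hQN : Q ≤ N) (hNPQ : N < P + Q) :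
    MapsTo (threeGapStep N P (-Q) (P - Q)) (Icc 0 N) (Icc 0 N) := by
  intro m ⟨h0, hN⟩
  simp only [threeGapStep, mem_Icc]
  split_ifs <;> omega

theorem threeGapStep_injOn (hNPQ : N < P + Q) :
    InjOn (threeGapStep N P (-Q) (P - Q)) (Icc 0 N) := by
  intro m ⟨hm0, hmN⟩ m' ⟨hm0', hmN'⟩ h
  simp only [threeGapStep] at h
  split_ifs at h <;> omega

theorem threeGapStep_sub_self (hPN : P ≤ N) (hQN : Q ≤ N) (hNPQ : N < P + Q) {m : ℤ}
    (hm : m ∈ Icc 0 N) :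
    threeGapStep N P (-Q) (P - Q) m - m
      = (if m < Q then P else 0) - (if N - P < m then Q else 0) := by
  obtain ⟨hm0, hmN⟩ := hm
  simp only [threeGapStep]
  split_ifs <;> omega

theorem mul_card_filter_eq_of_mapsTo (hPN : P ≤ N) (hQN : Q ≤ N) (hNPQ : N < P + Q)
    {S : Finset ℤ} (hS : S ⊆ Finset.Icc 0 N)
    (hmaps : MapsTo (threeGapStep N P (-Q) (P - Q)) S S) :
    P * (S.filter (· < Q)).card = Q * (S.filter (N - P < ·)).card := by
  have hSIcc : (S : Set ℤ) ⊆ Icc 0 N := fun m hm => by simpa using hS hm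
  have hinj := (threeGapStep_injOn hNPQ).mono hSIcc
  have hbij := (S.finite_toSet.injOn_iff_bijOn_of_mapsTo hmaps).mp hinj
  have hsum : ∑ m ∈ S, (threeGapStep N P (-Q) (P - Q) m - m) = 0 := by
    rw [Finset.sum_sub_distrib, sub_eq_zero]
    exact Finset.sum_nbij (g := id) _ hmaps hinj hbij.surjOn fun _ _ => rfl
  rw [Finset.sum_congr rfl fun m hm => threeGapStep_sub_self hPN hQN hNPQ (hSIcc hm),
    Finset.sum_sub_distrib, Finset.sum_ite, Finset.sum_ite, sub_eq_zero] at hsum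
  simpa [mul_comm] using hsum

theorem eq_Icc_of_mapsTo (hPN : P ≤ N) (hQN : Q ≤ N) (hNPQ : N < P + Q) (hcop : IsCoprime P Q)
    {S : Finset ℤ} (hS : S ⊆ Finset.Icc 0 N) (hne : S.Nonempty)
    (hmaps : MapsTo (threeGapStep N P (-Q) (P - Q)) S S) : S = Finset.Icc 0 N := by
  have hbal := mul_card_filter_eq_of_mapsTo hPN hQN hNPQ hS hmaps
  set A := S.filter (· < Q)
  set B := S.filter (N - P < ·)
  have hA : A ⊆ Finset.Icc 0 (Q - 1) := fun m hm => by
    have := hS (Finset.mem_filter.mp hm).1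
    simp only [A, Finset.mem_filter, Finset.mem_Icc] at hm this ⊢
    omega
  have hB : B ⊆ Finset.Icc (N - P + 1) N := fun m hm => by
    have := hS (Finset.mem_filter.mp hm).1
    simp only [B, Finset.mem_filter, Finset.mem_Icc] at hm this ⊢
    omega
  have hAcard : (A.card : ℤ) ≤ Q := by
    have := Finset.card_le_card hA
    rw [Int.card_Icc] at this
    omega
  have hAB : A ∪ B = S := by
    rw [Finset.filter_union_right]
    exact Finset.filter_true_of_mem fun m _ => by omega
  -- `Q ∣ P * #A` with `0 < #A ≤ Q` forces `#A = Q`, and then `#B = P`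
  have hA_pos : 0 < A.card := by
    by_contra! h
    have hA0 : A.card = 0 := by omega
    have hB0 : B.card = 0 := by
      rw [hA0, Nat.cast_zero, mul_zero, eq_comm, mul_eq_zero] at hbal
      exact_mod_cast hbal.resolve_left (by omega)
    rw [← hAB, Finset.card_eq_zero.mp hA0, Finset.card_eq_zero.mp hB0] at hne
    simp at hne
  have hAQ : (A.card : ℤ) = Q := by
    have hdvd : Q ∣ (A.card : ℤ) := hcop.symm.dvd_of_dvd_mul_left ⟨_, hbal⟩
    have := Int.le_of_dvd (by exact_mod_cast hA_pos) hdvd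
    omega
  have hBP : (B.card : ℤ) = P := by
    refine mul_left_cancel₀ (show Q ≠ 0 by omega) ?_
    rw [← hbal, hAQ, mul_comm]
  have hAeq : A = Finset.Icc 0 (Q - 1) :=
    Finset.eq_of_subset_of_card_le hA (by rw [Int.card_Icc]; omega)
  have hBeq : B = Finset.Icc (N - P + 1) N :=
    Finset.eq_of_subset_of_card_le hB (by rw [Int.card_Icc]; omega)
  refine hS.antisymm fun m hm => ?_
  rw [← hAB, hAeq, hBeq]
  simp only [Finset.mem_union, Finset.mem_Icc] at hm ⊢
  omega

theorem minimalPeriod_threeGapStep (hPN : P ≤ N) (hQN : Q ≤ N) (hNPQ : N < P + Q)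
    (hcop : IsCoprime P Q) {m : ℤ} (hm : m ∈ Icc 0 N) :
    (minimalPeriod (threeGapStep N P (-Q) (P - Q)) m : ℤ) = N + 1 := by
  rw [minimalPeriod_eq_card_of_minimal (s := Finset.Icc 0 N) (by simpa using hm)
    (by simpa using threeGapStep_mapsTo hPN hQN hNPQ) (by simpa using threeGapStep_injOn hNPQ)
    fun _ ht hne hmaps => eq_Icc_of_mapsTo hPN hQN hNPQ hcop ht hne hmaps, Int.card_Icc]
  omega

theorem iterate_threeGapStep_eq_iff (hPN : P ≤ N) (hQN : Q ≤ N) (hNPQ : N < P + Q)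
    (hcop : IsCoprime P Q) {m : ℤ} (hm : m ∈ Icc 0 N) (i j : ℕ) :
    (threeGapStep N P (-Q) (P - Q))^[i] m = (threeGapStep N P (-Q) (P - Q))^[j] m ↔
      (i : ℤ) % (N + 1) = (j : ℤ) % (N + 1) := by
  have hper := (threeGapStep_mapsTo hPN hQN hNPQ).mem_periodicPts_of_injOn (finite_Icc 0 N)
    (threeGapStep_injOn hNPQ) hm
  rw [iterate_eq_iterate_iff_modEq_minimalPeriod hper, ← Int.natCast_modEq_iff,
    minimalPeriod_threeGapStep hPN hQN hNPQ hcop hm]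
  rfl

end ThreeGap

theorem stmt_13_general
    (a q : ℤ → ℤ) (β : ℕ → ℝ)
    (hβ : ∀ k : ℕ, β (k + 1) = 1 / (β k - ⌊β k⌋))
    (ha : ∀ k : ℕ, a (k : ℤ) = ⌊β k⌋)
    (hqm : q (-1) = 0) (hq0 : q 0 = 1)
    (hqrec : ∀ k : ℤ, 0 ≤ k → q (k + 1) = a (k + 1) * q k + q (k - 1))
    (N : ℕ) (k : ℕ) (r s : ℤ)
    (hr : 1 ≤ r ∧ r ≤ a ((k : ℤ) + 1)) (hs : 0 ≤ s ∧ s ≤ q (k : ℤ) - 1)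
    (hN : (N : ℤ) = r * q (k : ℤ) + q ((k : ℤ) - 1) + s)
    (n : ℕ → ℤ) (hn0 : n 0 = 0)
    (hrec : ∀ i : ℕ, n (i + 1) = n i +
      (if 0 ≤ n i + (-1) ^ k * q (k : ℤ) ∧ n i + (-1) ^ k * q (k : ℤ) ≤ (N : ℤ) then
        (-1) ^ k * q (k : ℤ)
      else if 0 ≤ n i + (-1) ^ (k + 1) * (q ((k : ℤ) - 1) + r * q (k : ℤ)) ∧
          n i + (-1) ^ (k + 1) * (q ((k : ℤ) - 1) + r * q (k : ℤ)) ≤ (N : ℤ) then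
        (-1) ^ (k + 1) * (q ((k : ℤ) - 1) + r * q (k : ℤ))
      else (-1) ^ (k + 1) * (q ((k : ℤ) - 1) + (r - 1) * q (k : ℤ)))) :
    n (N + 1) = 0 ∧
      ∀ i j : ℕ, n i = n j ↔ (i : ℤ) % ((N : ℤ) + 1) = (j : ℤ) % ((N : ℤ) + 1) := by
  have ha_nonneg (j : ℕ) : 0 ≤ a (j + 1) := by
    rw [← Nat.cast_succ, ha, hβ]
    exact Int.floor_nonneg.mpr (one_div_nonneg.mpr (sub_nonneg.mpr (Int.floor_le _)))
  have hq_pred := (continuant_nonneg hqm hq0 hqrec ha_nonneg k).1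
  have hcop := (isCoprime_continuant_pred hq0 hqrec k).add_mul_right_right r
  set P := q k
  set Q := q (k - 1) + r * P
  have hPN : P ≤ N := by linarith [le_mul_of_one_le_left (by omega : 0 ≤ P) hr.1]
  have hQN : Q ≤ N := by omega
  have hNPQ : N < P + Q := by omega
  have key : ∀ i j : ℕ, n i = n j ↔ (i : ℤ) % ((N : ℤ) + 1) = (j : ℤ) % ((N : ℤ) + 1) := by
    rcases Nat.even_or_odd k with hk | hk
    · rw [hk.neg_one_pow, hk.add_one.neg_one_pow, show q (k - 1) + (r - 1) * P = Q - P by ring]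
        at hrec
      simp only [one_mul, neg_one_mul, neg_sub] at hrec
      have horbit := eq_iterate_of_forall_succ (f := threeGapStep N P (-Q) (P - Q)) hrec
      intro i j
      rw [horbit i, horbit j, hn0]
      exact iterate_threeGapStep_eq_iff hPN hQN hNPQ hcop (by simp) i j
    · have hreflect (i : ℕ) : N - n (i + 1) = threeGapStep N P (-Q) (P - Q) (N - n i) := by
        rw [hrec i, ← threeGapStep, sub_threeGapStep, hk.neg_one_pow, hk.add_one.neg_one_pow]
        congr 1 <;> ring
      have horbit := eq_iterate_of_forall_succ (u := fun i => (N : ℤ) - n i) hreflect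
      intro i j
      rw [← sub_right_inj (a := (N : ℤ)), horbit i, horbit j, hn0, sub_zero]
      exact iterate_threeGapStep_eq_iff hPN hQN hNPQ hcop (by simp) i j
  refine ⟨?_, key⟩
  simpa [hn0] using (key (N + 1) 0).mpr (by push_cast; simp)

/-- Cyclicity of the three-distance ordering: the recursively defined sequence
n_0 = 0, n_{i+1} = n_i + Δ_i, extended to all i ≥ 0, satisfies n_{N+1} = 0 and
more generally n_i = n_j if and only if i ≡ j (mod N+1). -/
theorem stmt_13
    (α : ℝ) (hirr : Irrational α)
    (a p q : ℤ → ℤ) (β : ℕ → ℝ)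
    (hβ0 : β 0 = α)
    (hβ : ∀ k : ℕ, β (k + 1) = 1 / (β k - ⌊β k⌋))
    (ha : ∀ k : ℕ, a (k : ℤ) = ⌊β k⌋)
    (hqm : q (-1) = 0) (hq0 : q 0 = 1)
    (hpm : p (-1) = 1) (hp0 : p 0 = a 0)
    (hqrec : ∀ k : ℤ, 0 ≤ k → q (k + 1) = a (k + 1) * q k + q (k - 1))
    (hprec : ∀ k : ℤ, 0 ≤ k → p (k + 1) = a (k + 1) * p k + p (k - 1))
    (D : ℤ → ℝ) (hD : ∀ k : ℤ, D k = (q k : ℝ) * α - (p k : ℝ))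
    (N : ℕ) (hN1 : 1 ≤ N) (k : ℕ) (r s : ℤ)
    (hk : q (k : ℤ) + q ((k : ℤ) - 1) ≤ (N : ℤ) ∧ (N : ℤ) < q ((k : ℤ) + 1) + q (k : ℤ))
    (hr : 1 ≤ r ∧ r ≤ a ((k : ℤ) + 1)) (hs : 0 ≤ s ∧ s ≤ q (k : ℤ) - 1)
    (hN : (N : ℤ) = r * q (k : ℤ) + q ((k : ℤ) - 1) + s)
    (n : ℕ → ℤ) (hn0 : n 0 = 0)
    (hrec : ∀ i : ℕ, n (i + 1) = n i +
      (if 0 ≤ n i + (-1) ^ k * q (k : ℤ) ∧ n i + (-1) ^ k * q (k : ℤ) ≤ (N : ℤ) then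
        (-1) ^ k * q (k : ℤ)
      else if 0 ≤ n i + (-1) ^ (k + 1) * (q ((k : ℤ) - 1) + r * q (k : ℤ)) ∧
          n i + (-1) ^ (k + 1) * (q ((k : ℤ) - 1) + r * q (k : ℤ)) ≤ (N : ℤ) then
        (-1) ^ (k + 1) * (q ((k : ℤ) - 1) + r * q (k : ℤ))
      else (-1) ^ (k + 1) * (q ((k : ℤ) - 1) + (r - 1) * q (k : ℤ)))) :
    n (N + 1) = 0 ∧
      ∀ i j : ℕ, n i = n j ↔ (i : ℤ) % ((N : ℤ) + 1) = (j : ℤ) % ((N : ℤ) + 1) :=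
  stmt_13_general a q β hβ ha hqm hq0 hqrec N k r s hr hs hN n hn0 hrec
end

section
/- Corollary (nearest integer distance): Let N ∈ ℕ, α irrational, K the largest integer with q_K ≤ N, γ ∈ ℝ, and n* the integer in [0, N] minimizing ||nα - γ||. Then the sum over 0 ≤ n ≤ N, n ≠ n*, of 1/||nα - γ|| is at most 8N(log q_K + 1) + 4 q_{K+1}(log(N/q_K) + 2). -/
/-!
The continued fraction enters only through the bound `‖r α‖ ≥ 1 / (2 q_k)` for `0 < |r| < q_k`,
obtained from the best approximation property of `p_{k-1} / q_{k-1}`. Hence the points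
`y n = n α - γ - round (n α - γ)`, `n ≤ N`, are `1 / (2 q_{K+1})`-separated, and
`1 / (2 q_K)`-separated within each block of `q_K` consecutive `n`. For `m` points that are
`δ`-separated, the `j`-th smallest value of `|y|` is at least `j δ / 2`, so the sum of `1 / |y|`
over all points but the one closest to `0` is at most `(2 / δ) H_{m-1}`. Applying this inside each
of the `N / q_K + 1` blocks, and then to the set of block minima, gives the two terms.
-/

open Finset

theorem harmonic_mono : Monotone harmonic :=
  monotone_nat_of_le_succ fun n => by
    rw [harmonic_succ]
    exact le_add_of_nonneg_right (by positivity)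

theorem harmonic_nonneg (n : ℕ) : (0 : ℝ) ≤ harmonic n := by
  exact_mod_cast harmonic_zero ▸ harmonic_mono n.zero_le

section Separated

variable {ι : Type*} {y : ι → ℝ} {δ : ℝ}

theorem card_le_of_separated {T : Finset ι} {t : ℝ} (hδ : 0 < δ) (ht : 0 ≤ t)
    (hbound : ∀ i ∈ T, |y i| ≤ t) (hsep : ∀ i ∈ T, ∀ j ∈ T, i ≠ j → δ ≤ |y i - y j|) :
    (#T : ℝ) ≤ 2 * t / δ + 1 := by
  have hnonneg : ∀ i ∈ T, 0 ≤ (y i + t) / δ := fun i hi =>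
    div_nonneg (by linarith [neg_abs_le (y i), hbound i hi]) hδ.le
  have hmaps : Set.MapsTo (fun i => ⌊(y i + t) / δ⌋₊) T (range (⌊2 * t / δ⌋₊ + 1)) := by
    intro i hi
    refine mem_range_succ_iff.2 (Nat.floor_le_floor ?_)
    gcongr
    linarith [le_abs_self (y i), hbound i hi]
  have hinj : Set.InjOn (fun i => ⌊(y i + t) / δ⌋₊) T := by
    intro i hi j hj hij
    by_contra hne
    have hfloor : ⌊(y i + t) / δ⌋ = ⌊(y j + t) / δ⌋ := by
      rw [← Int.natCast_floor_eq_floor (hnonneg i hi), ← Int.natCast_floor_eq_floor (hnonneg j hj)]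
      exact congrArg _ hij
    have hlt := Int.abs_sub_lt_one_of_floor_eq_floor hfloor
    rw [← sub_div, add_sub_add_right_eq_sub, abs_div, abs_of_pos hδ, div_lt_one hδ] at hlt
    exact (hsep i hi j hj hne).not_gt hlt
  calc (#T : ℝ) ≤ (⌊2 * t / δ⌋₊ + 1 : ℕ) := by
        exact_mod_cast (card_le_card_of_injOn _ hmaps hinj).trans (card_range _).le
    _ ≤ 2 * t / δ + 1 := by
        push_cast
        gcongr
        exact Nat.floor_le (by positivity)

variable [DecidableEq ι]

theorem sum_erase_inv_abs_le_of_separated (hδ : 0 < δ) {T : Finset ι}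
    (hsep : ∀ i ∈ T, ∀ j ∈ T, i ≠ j → δ ≤ |y i - y j|) {i₀ : ι} (hi₀ : i₀ ∈ T)
    (hmin : ∀ i ∈ T, |y i₀| ≤ |y i|) :
    ∑ i ∈ T.erase i₀, 1 / |y i| ≤ 2 / δ * harmonic (#T - 1) := by
  induction T using Finset.strongInduction with
  | H T ih =>
  rcases (T.erase i₀).eq_empty_or_nonempty with hT | hT
  · rw [hT, sum_empty]
    have := harmonic_nonneg (#T - 1)
    positivity
  obtain ⟨i₁, hi₁, hmax⟩ := (T.erase i₀).exists_max_image (fun i => |y i|) hT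
  have hi₁T := mem_of_mem_erase hi₁
  have hi₀' : i₀ ∈ T.erase i₁ := mem_erase.2 ⟨(ne_of_mem_erase hi₁).symm, hi₀⟩
  obtain ⟨n, hn⟩ : ∃ n, #T = n + 2 := ⟨#T - 2, by
    have := card_le_card (insert_subset hi₀ (singleton_subset_iff.2 hi₁T))
    rw [card_pair (ne_of_mem_erase hi₁).symm] at this
    omega⟩
  have hbound : ∀ i ∈ T, |y i| ≤ |y i₁| := fun i hi => by
    rcases eq_or_ne i i₀ with rfl | hne
    · exact hmin i₁ hi₁T
    · exact hmax i (mem_erase.2 ⟨hne, hi⟩)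
  have hcard : (n + 1 : ℝ) * δ ≤ 2 * |y i₁| := by
    have := card_le_of_separated hδ (abs_nonneg _) hbound hsep
    rw [hn, ← sub_le_iff_le_add, le_div_iff₀ hδ] at this
    push_cast at this
    linarith
  have hlast : 1 / |y i₁| ≤ 2 / δ * (n + 1 : ℝ)⁻¹ := by
    have hy : 0 < |y i₁| := by nlinarith
    rw [div_le_iff₀ hy]
    field_simp
    linarith
  have hrest := ih (T.erase i₁) (erase_ssubset hi₁T)
    (fun i hi j hj => hsep i (mem_of_mem_erase hi) j (mem_of_mem_erase hj)) hi₀'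
    (fun i hi => hmin i (mem_of_mem_erase hi))
  rw [card_erase_of_mem hi₁T, hn, show n + 2 - 1 - 1 = n by omega] at hrest
  rw [← add_sum_erase _ _ hi₁, erase_right_comm, hn, show n + 2 - 1 = n + 1 by omega,
    harmonic_succ]
  push_cast
  linarith

theorem sum_erase_inv_abs_le_of_blocks {κ : Type*} [DecidableEq κ] {S : Finset ι} {blk : ι → κ}
    {δ₁ δ₂ : ℝ} (hδ₁ : 0 < δ₁) (hδ₂ : 0 < δ₂) {Q B : ℕ}
    (hsep₁ : ∀ i ∈ S, ∀ j ∈ S, i ≠ j → blk i = blk j → δ₁ ≤ |y i - y j|)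
    (hsep₂ : ∀ i ∈ S, ∀ j ∈ S, i ≠ j → δ₂ ≤ |y i - y j|)
    (hQ : ∀ c, #{i ∈ S | blk i = c} ≤ Q) (hB : #(S.image blk) ≤ B)
    {i₀ : ι} (hi₀ : i₀ ∈ S) (hmin : ∀ i ∈ S, |y i₀| ≤ |y i|) :
    ∑ i ∈ S.erase i₀, 1 / |y i| ≤
      B * (2 / δ₁ * harmonic (Q - 1)) + 2 / δ₂ * harmonic (B - 1) := by
  have hchoice : ∀ c ∈ S.image blk, ∃ m ∈ {i ∈ S | blk i = c},
      (∀ i ∈ {i ∈ S | blk i = c}, |y m| ≤ |y i|) ∧ (c = blk i₀ → m = i₀) := by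
    intro c hc
    by_cases hc₀ : c = blk i₀
    · exact ⟨i₀, mem_filter.2 ⟨hi₀, hc₀.symm⟩, fun i hi => hmin i (mem_filter.1 hi).1,
        fun _ => rfl⟩
    · obtain ⟨i, hi, rfl⟩ := mem_image.1 hc
      obtain ⟨m, hm, hmmin⟩ := exists_min_image {j ∈ S | blk j = blk i} (fun j => |y j|)
        ⟨i, mem_filter.2 ⟨hi, rfl⟩⟩
      exact ⟨m, hm, hmmin, fun h => absurd h hc₀⟩
  have : Nonempty ι := ⟨i₀⟩
  choose! m hm hmmin hmi₀ using hchoice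
  have hblkm : ∀ c ∈ S.image blk, blk (m c) = c := fun c hc => (mem_filter.1 (hm c hc)).2
  have hinj : Set.InjOn m (S.image blk) := fun c hc c' hc' h => by
    rw [← hblkm c hc, ← hblkm c' hc', h]
  have hi₀M : i₀ ∈ (S.image blk).image m :=
    mem_image.2 ⟨blk i₀, mem_image_of_mem blk hi₀, hmi₀ _ (mem_image_of_mem blk hi₀) rfl⟩
  have hsplit : ∑ i ∈ S.erase i₀, 1 / |y i| =
      ∑ c ∈ S.image blk, ∑ i ∈ {i ∈ S | blk i = c}.erase (m c), 1 / |y i| +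
        ∑ i ∈ ((S.image blk).image m).erase i₀, 1 / |y i| := by
    have hfib := sum_fiberwise_of_maps_to (s := S) (fun i hi => mem_image_of_mem blk hi)
      (fun i => 1 / |y i|)
    rw [← sum_congr rfl fun c hc => add_sum_erase _ _ (hm c hc), sum_add_distrib,
      ← sum_image (f := fun i => 1 / |y i|) hinj, ← add_sum_erase _ _ hi₀M,
      ← add_sum_erase _ _ hi₀] at hfib
    linarith
  rw [hsplit]
  gcongr ?_ + ?_
  · have hblock : ∀ c ∈ S.image blk, ∑ i ∈ {i ∈ S | blk i = c}.erase (m c), 1 / |y i| ≤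
        2 / δ₁ * harmonic (Q - 1) := fun c hc => by
      refine (sum_erase_inv_abs_le_of_separated hδ₁ (fun i hi j hj hij => ?_) (hm c hc)
        (hmmin c hc)).trans ?_
      · rw [mem_filter] at hi hj
        exact hsep₁ i hi.1 j hj.1 hij (hi.2.trans hj.2.symm)
      · gcongr
        exact_mod_cast harmonic_mono (Nat.sub_le_sub_right (hQ c) 1)
    calc _ ≤ ∑ c ∈ S.image blk, 2 / δ₁ * (harmonic (Q - 1) : ℝ) := sum_le_sum hblock
      _ ≤ _ := by
        rw [sum_const, nsmul_eq_mul]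
        have := harmonic_nonneg (Q - 1)
        gcongr
  · have hMS : (S.image blk).image m ⊆ S := fun i hi => by
      obtain ⟨c, hc, rfl⟩ := mem_image.1 hi
      exact (mem_filter.1 (hm c hc)).1
    refine (sum_erase_inv_abs_le_of_separated hδ₂ (fun i hi j hj => hsep₂ i (hMS hi) j (hMS hj))
      hi₀M (fun i hi => hmin i (hMS hi))).trans ?_
    gcongr
    exact_mod_cast harmonic_mono (Nat.sub_le_sub_right (card_image_le.trans hB) 1)

end Separated

theorem Nat.abs_sub_lt_of_div_eq {m n Q : ℕ} (hQ : 0 < Q) (h : m / Q = n / Q) :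
    |(m : ℤ) - n| < Q := by
  have hm₁ := Nat.div_mul_le_self m Q
  have hm₂ := Nat.lt_div_mul_add (a := m) hQ
  have := Nat.div_mul_le_self n Q
  have := Nat.lt_div_mul_add (a := n) hQ
  rw [h] at hm₁ hm₂
  rw [abs_lt]
  constructor <;> omega

theorem card_filter_div_eq_le (s : Finset ℕ) {Q : ℕ} (hQ : 0 < Q) (c : ℕ) :
    #{n ∈ s | n / Q = c} ≤ Q := by
  calc #{n ∈ s | n / Q = c} ≤ #(Ico (c * Q) (c * Q + Q)) := by
        refine card_le_card fun n hn => ?_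
        have := (Nat.div_eq_iff hQ).1 (mem_filter.1 hn).2
        rw [mem_Ico]
        omega
    _ = Q := by simp

theorem card_image_div_range_le (N Q : ℕ) : #((range (N + 1)).image (· / Q)) ≤ N / Q + 1 := by
  calc _ ≤ #(range (N / Q + 1)) := card_le_card fun c hc => by
        obtain ⟨n, hn, rfl⟩ := mem_image.1 hc
        exact mem_range_succ_iff.2 (Nat.div_le_div_right (mem_range_succ_iff.1 hn))
    _ = N / Q + 1 := card_range _

theorem sum_erase_inv_abs_le_of_separated_range {y : ℕ → ℝ} {N Q : ℕ} {Q' : ℝ} (hQ : 0 < Q)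
    (hQN : Q ≤ N) (hQ' : 0 < Q')
    (hsep : ∀ m ≤ N, ∀ n ≤ N, m ≠ n → |(m : ℤ) - n| < Q → 1 / (2 * Q) ≤ |y m - y n|)
    (hsep' : ∀ m ≤ N, ∀ n ≤ N, m ≠ n → 1 / (2 * Q') ≤ |y m - y n|)
    {n₀ : ℕ} (hn₀ : n₀ ≤ N) (hmin : ∀ n ≤ N, |y n₀| ≤ |y n|) :
    ∑ n ∈ (range (N + 1)).erase n₀, 1 / |y n| ≤
      8 * N * (Real.log Q + 1) + 4 * Q' * (Real.log (N / Q) + 2) := by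
  have hQR : (0 : ℝ) < Q := by exact_mod_cast hQ
  have key := sum_erase_inv_abs_le_of_blocks (S := range (N + 1)) (blk := (· / Q))
    (by positivity : (0 : ℝ) < 1 / (2 * Q)) (by positivity : (0 : ℝ) < 1 / (2 * Q'))
    (fun m hm n hn hmn h => hsep m (mem_range_succ_iff.1 hm) n (mem_range_succ_iff.1 hn) hmn
      (Nat.abs_sub_lt_of_div_eq hQ h))
    (fun m hm n hn => hsep' m (mem_range_succ_iff.1 hm) n (mem_range_succ_iff.1 hn))
    (card_filter_div_eq_le _ hQ) (card_image_div_range_le N Q) (mem_range_succ_iff.2 hn₀)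
    (fun n hn => hmin n (mem_range_succ_iff.1 hn))
  refine key.trans ?_
  have hblocks : ((N / Q + 1 : ℕ) : ℝ) * Q ≤ 2 * N := by
    have := Nat.div_mul_le_self N Q
    exact_mod_cast (by rw [Nat.succ_mul]; omega : (N / Q + 1) * Q ≤ 2 * N)
  have hHQ : (harmonic (Q - 1) : ℝ) ≤ 1 + Real.log Q :=
    (Rat.cast_le.2 (harmonic_mono (Nat.sub_le Q 1))).trans (harmonic_le_one_add_log Q)
  have hHN : (harmonic (N / Q + 1 - 1) : ℝ) ≤ 1 + Real.log (N / Q) := by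
    rw [Nat.add_sub_cancel, ← Nat.floor_div_eq_div (K := ℝ)]
    exact harmonic_floor_le_one_add_log _ ((one_le_div hQR).2 (by exact_mod_cast hQN))
  have hlogQ : 0 ≤ Real.log Q := Real.log_nonneg (by exact_mod_cast hQ)
  have := harmonic_nonneg (Q - 1)
  calc _ = 4 * (((N / Q + 1 : ℕ) : ℝ) * Q) * harmonic (Q - 1) +
        4 * Q' * harmonic (N / Q + 1 - 1) := by
        field_simp
        ring
    _ ≤ 4 * (2 * N) * (1 + Real.log Q) + 4 * Q' * (1 + Real.log (N / Q)) := by gcongr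
    _ ≤ _ := by linarith

section ConvergentPair

variable {α : ℝ} {p₀ q₀ p₁ q₁ : ℤ}

theorem abs_le_abs_mul_sub_of_convergent_pair (hdet : |p₀ * q₁ - p₁ * q₀| = 1) (hq₀ : 0 < q₀)
    (hsign : (q₀ * α - p₀) * (q₁ * α - p₁) ≤ 0) {r s : ℤ} (hr : 0 < r) (hrq : r < q₁) :
    |q₀ * α - p₀| ≤ |r * α - s| := by
  set e := p₀ * q₁ - p₁ * q₀ with he_def
  have he : e * e = 1 := by
    rcases abs_eq zero_le_one |>.1 hdet with h | h <;> rw [h] <;> norm_num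
  -- `(r, s)` in the basis `(q₀, p₀), (q₁, p₁)` of `ℤ²`
  set x := e * (s * q₁ - r * p₁)
  set y := e * (r * p₀ - s * q₀)
  have hxr : x * q₀ + y * q₁ = r := by linear_combination (e * r) * he_def + r * he
  have hxs : x * p₀ + y * p₁ = s := by linear_combination (e * s) * he_def + s * he
  have hlin : r * α - s = x * (q₀ * α - p₀) + y * (q₁ * α - p₁) := by
    rw [← hxr, ← hxs]; push_cast; ring
  -- `x = 0` would give `r = y q₁`, and `x, y` of equal signs would give `|r| ≥ q₀ + q₁`
  have hx : 1 ≤ |x| ∧ x * y ≤ 0 := by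
    rcases lt_trichotomy x 0 with hx | hx | hx <;> rcases lt_trichotomy y 0 with hy | hy | hy
    all_goals first
      | exact ⟨by rw [abs_of_neg hx]; omega, by nlinarith⟩
      | exact ⟨by rw [abs_of_pos hx]; omega, by nlinarith⟩
      | nlinarith
  have hxR : (1 : ℝ) ≤ |(x : ℝ)| := by exact_mod_cast hx.1
  have hxyR : (x : ℝ) * y ≤ 0 := by exact_mod_cast hx.2
  calc |q₀ * α - p₀| ≤ |(x : ℝ)| * |q₀ * α - p₀| := le_mul_of_one_le_left (abs_nonneg _) hxR
    _ = |x * (q₀ * α - p₀)| := (abs_mul _ _).symm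
    _ ≤ |r * α - s| := by
      rw [hlin, ← sq_le_sq]
      nlinarith [mul_nonneg_of_nonpos_of_nonpos hxyR hsign]

theorem one_le_abs_mul_sub_mul_add_of_convergent_pair (hdet : |p₀ * q₁ - p₁ * q₀| = 1)
    (hq₀ : 0 ≤ q₀) (hq₁ : 0 ≤ q₁) (habs : |q₁ * α - p₁| ≤ |q₀ * α - p₀|) :
    1 ≤ |q₀ * α - p₀| * (q₀ + q₁) := by
  have hq₀R : (0 : ℝ) ≤ q₀ := by exact_mod_cast hq₀
  have hq₁R : (0 : ℝ) ≤ q₁ := by exact_mod_cast hq₁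
  have hdetR : |(q₀ * α - p₀) * q₁ - (q₁ * α - p₁) * q₀| = 1 := by
    rw [show (q₀ * α - p₀) * q₁ - (q₁ * α - p₁) * q₀ = -((p₀ * q₁ - p₁ * q₀ : ℤ) : ℝ) by
      push_cast; ring, abs_neg, ← Int.cast_abs, hdet, Int.cast_one]
  calc (1 : ℝ) = |(q₀ * α - p₀) * q₁ - (q₁ * α - p₁) * q₀| := hdetR.symm
    _ ≤ |q₀ * α - p₀| * q₁ + |q₁ * α - p₁| * q₀ := by
      refine (abs_sub _ _).trans_eq ?_
      rw [abs_mul, abs_mul, abs_of_nonneg hq₀R, abs_of_nonneg hq₁R]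
    _ ≤ |q₀ * α - p₀| * (q₀ + q₁) := by nlinarith

theorem one_div_two_mul_le_abs_mul_sub_of_convergent_pair (hdet : |p₀ * q₁ - p₁ * q₀| = 1)
    (hq₀ : 0 < q₀) (hq : q₀ ≤ q₁) (hsign : (q₀ * α - p₀) * (q₁ * α - p₁) ≤ 0)
    (habs : |q₁ * α - p₁| ≤ |q₀ * α - p₀|) {r s : ℤ} (hr : r ≠ 0) (hrq : |r| < q₁) :
    1 / (2 * q₁) ≤ |r * α - s| := by
  wlog hr₀ : 0 < r generalizing r s
  · have := this (r := -r) (s := -s) (by omega) (by rwa [abs_neg]) (by omega)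
    rwa [Int.cast_neg, Int.cast_neg, neg_mul, ← neg_add', abs_neg, ← sub_eq_add_neg] at this
  have hq₀R : (0 : ℝ) < q₀ := by exact_mod_cast hq₀
  have hqR : (q₀ : ℝ) ≤ q₁ := by exact_mod_cast hq
  have hlow := one_le_abs_mul_sub_mul_add_of_convergent_pair hdet hq₀.le (hq₀.le.trans hq) habs
  have hbest := abs_le_abs_mul_sub_of_convergent_pair hdet hq₀ hsign (s := s) hr₀
    (by rwa [abs_of_pos hr₀] at hrq)
  rw [div_le_iff₀ (by linarith)]
  nlinarith [abs_nonneg ((q₀ : ℝ) * α - p₀)]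

end ConvergentPair

/-- `β k` are the complete quotients of `α`, `a k = ⌊β k⌋` its partial quotients and `p k / q k`
its convergents, with the conventional values `p (-1) = 1`, `q (-1) = 0`. -/
structure IsContFracExpansion (α : ℝ) (a p q : ℤ → ℤ) (β : ℕ → ℝ) : Prop where
  irrational : Irrational α
  β_zero : β 0 = α
  β_succ : ∀ k : ℕ, β (k + 1) = 1 / (β k - ⌊β k⌋)
  a_eq_floor : ∀ k : ℕ, a (k : ℤ) = ⌊β k⌋
  q_neg_one : q (-1) = 0
  q_zero : q 0 = 1
  p_neg_one : p (-1) = 1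
  p_zero : p 0 = a 0
  q_succ : ∀ k : ℤ, 0 ≤ k → q (k + 1) = a (k + 1) * q k + q (k - 1)
  p_succ : ∀ k : ℤ, 0 ≤ k → p (k + 1) = a (k + 1) * p k + p (k - 1)

namespace IsContFracExpansion

variable {α : ℝ} {a p q : ℤ → ℤ} {β : ℕ → ℝ} (h : IsContFracExpansion α a p q β)
include h

theorem irrational_β (k : ℕ) : Irrational (β k) := by
  induction k with
  | zero => exact h.β_zero ▸ h.irrational
  | succ k ih =>
    rw [h.β_succ, one_div]
    exact (ih.sub_intCast _).inv

theorem β_succ_mul_fract (k : ℕ) : β (k + 1) * Int.fract (β k) = 1 := by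
  have hpos : 0 < Int.fract (β k) :=
    Int.fract_pos.2 ((h.irrational_β k).ne_int _)
  rw [h.β_succ, Int.self_sub_floor, one_div_mul_cancel hpos.ne']

theorem one_lt_β_succ (k : ℕ) : 1 < β (k + 1) := by
  have := h.β_succ_mul_fract k
  nlinarith [Int.fract_lt_one (β k), Int.fract_nonneg (β k)]

theorem one_le_a_succ (k : ℕ) : 1 ≤ a (k + 1) := by
  rw [show (k : ℤ) + 1 = (k + 1 : ℕ) by push_cast; rfl, h.a_eq_floor, Int.le_floor]
  exact_mod_cast (h.one_lt_β_succ k).le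

theorem one_le_q : ∀ k : ℕ, 1 ≤ q k
  | 0 => h.q_zero.ge
  | 1 => by
    have := h.q_succ 0 le_rfl
    have := h.one_le_a_succ 0
    simp_all [h.q_zero, h.q_neg_one]
  | k + 2 => by
    have := h.q_succ (k + 1) (by positivity)
    have := h.one_le_a_succ (k + 1)
    have := one_le_q k
    have := one_le_q (k + 1)
    push_cast at *
    rw [show (k : ℤ) + 1 + 1 = k + 2 by ring, add_sub_cancel_right] at *
    nlinarith

theorem q_le_q_succ (k : ℕ) : q k ≤ q (k + 1) := by
  have hpred : 0 ≤ q (k - 1) := by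
    cases k with
    | zero => exact h.q_neg_one.ge
    | succ j => simpa using zero_le_one.trans (h.one_le_q j)
  rw [h.q_succ k (by positivity)]
  nlinarith [h.one_le_a_succ k, h.one_le_q k]

theorem abs_det_eq_one (k : ℕ) : |p k * q (k + 1) - p (k + 1) * q k| = 1 := by
  induction k with
  | zero =>
    have hq := h.q_succ 0 le_rfl
    have hp := h.p_succ 0 le_rfl
    norm_num at hq hp
    have hdet : p 0 * q 1 - p 1 * q 0 = -1 := by
      rw [hq, hp, h.q_zero, h.q_neg_one, h.p_zero, h.p_neg_one]
      ring
    norm_num [hdet]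
  | succ k ih =>
    have hq := h.q_succ (k + 1) (by positivity)
    have hp := h.p_succ (k + 1) (by positivity)
    rw [add_sub_cancel_right] at hq hp
    push_cast
    refine Eq.trans ?_ ih
    rw [hq, hp, ← abs_neg]
    congr 1
    ring

theorem β_succ_mul (k : ℕ) :
    β (k + 1) * (q k * α - p k) = -(q (k - 1) * α - p (k - 1)) := by
  induction k with
  | zero =>
    have hfract := h.β_succ_mul_fract 0
    have ha : a 0 = ⌊α⌋ := by simpa [h.β_zero] using h.a_eq_floor 0
    rw [Int.fract, h.β_zero] at hfract
    simp only [Nat.cast_zero, zero_sub, h.q_zero, h.p_zero, h.q_neg_one, h.p_neg_one, ha]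
    push_cast
    linear_combination hfract
  | succ k ih =>
    have hrec : (q (k + 1) : ℝ) * α - p (k + 1) =
        a (k + 1) * (q k * α - p k) + (q (k - 1) * α - p (k - 1)) := by
      rw [h.q_succ k (by positivity), h.p_succ k (by positivity)]
      push_cast
      ring
    have ha : (a (k + 1) : ℝ) = ⌊β (k + 1)⌋ := by
      rw [show (k : ℤ) + 1 = (k + 1 : ℕ) by push_cast; rfl, h.a_eq_floor]
    have hfract := h.β_succ_mul_fract (k + 1)
    rw [Int.fract] at hfract
    push_cast
    rw [add_sub_cancel_right, hrec, ha]
    linear_combination β (k + 2) * ih - (q k * α - p k) * hfract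

theorem eq_neg_β_mul_succ (k : ℕ) :
    q k * α - p k = -(β (k + 2) * (q (k + 1) * α - p (k + 1))) := by
  have := h.β_succ_mul (k + 1)
  push_cast at this
  rw [add_sub_cancel_right] at this
  linear_combination this

theorem mul_succ_nonpos (k : ℕ) :
    (q k * α - p k) * (q (k + 1) * α - p (k + 1)) ≤ 0 := by
  have hβ : 1 < β (k + 2) := h.one_lt_β_succ (k + 1)
  rw [h.eq_neg_β_mul_succ k, neg_mul, mul_assoc, neg_nonpos]
  exact mul_nonneg (by linarith) (mul_self_nonneg _)

theorem abs_succ_le (k : ℕ) : |q (k + 1) * α - p (k + 1)| ≤ |q k * α - p k| := by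
  have hβ : 1 < β (k + 2) := h.one_lt_β_succ (k + 1)
  rw [h.eq_neg_β_mul_succ k, abs_neg, abs_mul, abs_of_pos (by linarith : 0 < β (k + 2))]
  exact le_mul_of_one_le_left (abs_nonneg _) hβ.le

theorem one_div_two_mul_le_abs_mul_sub (k : ℕ) {r s : ℤ} (hr : r ≠ 0) (hrq : |r| < q k) :
    1 / (2 * q k) ≤ |r * α - s| := by
  cases k with
  | zero =>
    rw [Nat.cast_zero, h.q_zero] at hrq
    exact absurd (Int.abs_lt_one_iff.1 hrq) hr
  | succ k =>
    push_cast at hrq ⊢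
    exact one_div_two_mul_le_abs_mul_sub_of_convergent_pair (h.abs_det_eq_one k)
      (by linarith [h.one_le_q k]) (h.q_le_q_succ k) (h.mul_succ_nonpos k) (h.abs_succ_le k) hr hrq

end IsContFracExpansion

theorem stmt_16_general
    (α : ℝ) (hirr : Irrational α)
    (a p q : ℤ → ℤ) (β : ℕ → ℝ)
    (hβ0 : β 0 = α)
    (hβ : ∀ k : ℕ, β (k + 1) = 1 / (β k - ⌊β k⌋))
    (ha : ∀ k : ℕ, a (k : ℤ) = ⌊β k⌋)
    (hqm : q (-1) = 0) (hq0 : q 0 = 1)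
    (hpm : p (-1) = 1) (hp0 : p 0 = a 0)
    (hqrec : ∀ k : ℤ, 0 ≤ k → q (k + 1) = a (k + 1) * q k + q (k - 1))
    (hprec : ∀ k : ℤ, 0 ≤ k → p (k + 1) = a (k + 1) * p k + p (k - 1))
    (N : ℕ) (K : ℕ)
    (hK : q (K : ℤ) ≤ (N : ℤ)) (hKmax : ∀ j : ℕ, q (j : ℤ) ≤ (N : ℤ) → j ≤ K)
    (γ : ℝ) (nstar : ℕ) (hnstar : nstar ≤ N)
    (hmin : ∀ m : ℕ, m ≤ N →
      |(nstar : ℝ) * α - γ - round ((nstar : ℝ) * α - γ)| ≤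
        |(m : ℝ) * α - γ - round ((m : ℝ) * α - γ)|) :
    ∑ n ∈ (Finset.range (N + 1)).erase nstar,
        1 / |(n : ℝ) * α - γ - round ((n : ℝ) * α - γ)| ≤
      8 * (N : ℝ) * (Real.log (q (K : ℤ) : ℝ) + 1) +
        4 * (q ((K : ℤ) + 1) : ℝ) * (Real.log ((N : ℝ) / (q (K : ℤ) : ℝ)) + 2) := by
  have h : IsContFracExpansion α a p q β :=
    ⟨hirr, hβ0, hβ, ha, hqm, hq0, hpm, hp0, hqrec, hprec⟩
  have hsep (k m n : ℕ) (hmn : m ≠ n) (hk : |(m : ℤ) - n| < q k) :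
      1 / (2 * q k) ≤ |(m * α - γ - round (m * α - γ)) - (n * α - γ - round (n * α - γ))| := by
    have := h.one_div_two_mul_le_abs_mul_sub k (s := round (m * α - γ) - round (n * α - γ))
      (by omega) hk
    push_cast at this
    convert this using 2
    ring
  have hNK : (N : ℤ) < q (K + 1) := by
    by_contra! hle
    exact absurd (hKmax (K + 1) (by exact_mod_cast hle)) (by omega)
  lift q K to ℕ using (zero_le_one.trans (h.one_le_q K)) with Q hQ
  push_cast at hsep ⊢
  exact sum_erase_inv_abs_le_of_separated_range (by have := h.one_le_q K; omega)
    (by exact_mod_cast hK) (Int.cast_pos.2 (by omega))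
    (fun m _ n _ hmn hlt => by simpa [← hQ] using hsep K m n hmn (by simpa [← hQ] using hlt))
    (fun m hm n hn hmn => by simpa using hsep (K + 1) m n hmn (by push_cast; rw [abs_lt]; omega))
    hnstar hmin

/-- Corollary (nearest integer distance): with n* minimizing ‖nα - γ‖ over 0 ≤ n ≤ N,
∑_{0 ≤ n ≤ N, n ≠ n*} 1/‖nα - γ‖ ≤ 8N(log q_K + 1) + 4 q_{K+1}(log(N/q_K) + 2),
where ‖x‖ = |x - round x| is the distance to the nearest integer. -/
theorem stmt_16
    (α : ℝ) (hirr : Irrational α)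
    (a p q : ℤ → ℤ) (β : ℕ → ℝ)
    (hβ0 : β 0 = α)
    (hβ : ∀ k : ℕ, β (k + 1) = 1 / (β k - ⌊β k⌋))
    (ha : ∀ k : ℕ, a (k : ℤ) = ⌊β k⌋)
    (hqm : q (-1) = 0) (hq0 : q 0 = 1)
    (hpm : p (-1) = 1) (hp0 : p 0 = a 0)
    (hqrec : ∀ k : ℤ, 0 ≤ k → q (k + 1) = a (k + 1) * q k + q (k - 1))
    (hprec : ∀ k : ℤ, 0 ≤ k → p (k + 1) = a (k + 1) * p k + p (k - 1))
    (D : ℤ → ℝ) (hD : ∀ k : ℤ, D k = (q k : ℝ) * α - (p k : ℝ))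
    (N : ℕ) (hN1 : 1 ≤ N) (K : ℕ)
    (hK : q (K : ℤ) ≤ (N : ℤ)) (hKmax : ∀ j : ℕ, q (j : ℤ) ≤ (N : ℤ) → j ≤ K)
    (γ : ℝ) (nstar : ℕ) (hnstar : nstar ≤ N)
    (hmin : ∀ m : ℕ, m ≤ N →
      |(nstar : ℝ) * α - γ - round ((nstar : ℝ) * α - γ)| ≤
        |(m : ℝ) * α - γ - round ((m : ℝ) * α - γ)|) :
    ∑ n ∈ (Finset.range (N + 1)).erase nstar,
        1 / |(n : ℝ) * α - γ - round ((n : ℝ) * α - γ)| ≤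
      8 * (N : ℝ) * (Real.log (q (K : ℤ) : ℝ) + 1) +
        4 * (q ((K : ℤ) + 1) : ℝ) * (Real.log ((N : ℝ) / (q (K : ℤ) : ℝ)) + 2) :=
  stmt_16_general α hirr a p q β hβ0 hβ ha hqm hq0 hpm hp0 hqrec hprec N K hK hKmax γ nstar hnstar
    hmin
end

section
/- Generalized sum with exponent b > 1: Under the setup of the main theorem, the sum over 0 ≤ n ≤ N, n ≠ n', of 1/{nα - γ}^b is at most 2^{1+b} ζ(b) N^b + 2^b ζ(b) q_{K+1}^b, where ζ is the Riemann zeta function. -/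
/-!
Put `δ = |q_K α - p_K|`. Two of the points `{n α - γ}`, `0 ≤ n ≤ N`, differ by `j α - m` with
`0 < j ≤ N < q_{K+1}`, so by the best-approximation property of convergents they are at least `δ`
apart; and `δ ≥ 1 / (2 q_{K+1})`, since `q_{K+1} (q_K α - p_K) - q_K (q_{K+1} α - p_{K+1}) = ±1`
and `|q_{K+1} α - p_{K+1}| ≤ δ`. Hence the point of rank `i ≥ 1` above the minimum is at least
`i / (2 q_{K+1})`, and the sum is at most `(2 q_{K+1})^b ζ(b)`.
-/

section ContinuedFraction

variable {α : ℝ} {a p q : ℤ → ℤ} {β : ℕ → ℝ}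

theorem irrational_remainder (hirr : Irrational α) (hβ0 : β 0 = α)
    (hβ : ∀ k : ℕ, β (k + 1) = 1 / (β k - ⌊β k⌋)) (k : ℕ) : Irrational (β k) := by
  induction k with
  | zero => rwa [hβ0]
  | succ k ih => rw [hβ k, one_div]; exact (ih.sub_intCast _).inv

theorem sub_floor_remainder_pos (hirr : Irrational α) (hβ0 : β 0 = α)
    (hβ : ∀ k : ℕ, β (k + 1) = 1 / (β k - ⌊β k⌋)) (k : ℕ) : 0 < β k - ⌊β k⌋ :=
  Int.fract_pos.2 ((irrational_remainder hirr hβ0 hβ k).ne_int _)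

theorem one_lt_remainder_succ (hirr : Irrational α) (hβ0 : β 0 = α)
    (hβ : ∀ k : ℕ, β (k + 1) = 1 / (β k - ⌊β k⌋)) (k : ℕ) : 1 < β (k + 1) := by
  rw [hβ k, one_div]
  exact one_lt_inv₀ (sub_floor_remainder_pos hirr hβ0 hβ k) |>.2 (Int.fract_lt_one (β k))

theorem one_le_partialQuotient_succ (hirr : Irrational α) (hβ0 : β 0 = α)
    (hβ : ∀ k : ℕ, β (k + 1) = 1 / (β k - ⌊β k⌋)) (ha : ∀ k : ℕ, a (k : ℤ) = ⌊β k⌋) (k : ℕ) :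
    1 ≤ a (k + 1) := by
  rw [← Nat.cast_succ, ha, Int.le_floor, Int.cast_one]
  exact (one_lt_remainder_succ hirr hβ0 hβ k).le

theorem denom_nonneg_and_le_succ (ha : ∀ k : ℕ, 1 ≤ a (k + 1)) (hqm : q (-1) = 0)
    (hq0 : q 0 = 1) (hqrec : ∀ k : ℤ, 0 ≤ k → q (k + 1) = a (k + 1) * q k + q (k - 1)) (k : ℕ) :
    0 ≤ q k ∧ q k ≤ q (k + 1) := by
  induction k with
  | zero =>
    have h := hqrec 0 le_rfl
    norm_num [hqm, hq0] at h ⊢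
    simpa [h] using ha 0
  | succ k ih =>
    have h := hqrec (k + 1) (by positivity)
    have ha' := ha (k + 1)
    push_cast at h ha' ⊢
    rw [add_sub_cancel_right] at h
    exact ⟨by linarith, by nlinarith⟩

theorem convergent_det (hqm : q (-1) = 0) (hq0 : q 0 = 1) (hpm : p (-1) = 1)
    (hqrec : ∀ k : ℤ, 0 ≤ k → q (k + 1) = a (k + 1) * q k + q (k - 1))
    (hprec : ∀ k : ℤ, 0 ≤ k → p (k + 1) = a (k + 1) * p k + p (k - 1)) (k : ℕ) :
    p k * q (k + 1) - p (k + 1) * q k = (-1) ^ (k + 1) := by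
  induction k with
  | zero =>
    have hq := hqrec 0 le_rfl
    have hp := hprec 0 le_rfl
    norm_num [hqm, hq0, hpm] at hq hp ⊢
    rw [hq, hp]
    ring
  | succ k ih =>
    have hq := hqrec (k + 1) (by positivity)
    have hp := hprec (k + 1) (by positivity)
    push_cast at hq hp ⊢
    rw [add_sub_cancel_right] at hq hp
    rw [hq, hp, pow_succ]
    linear_combination -ih

theorem remainder_mul_eq_neg (hβ : ∀ k : ℕ, β (k + 1) = 1 / (β k - ⌊β k⌋))
    (ha : ∀ k : ℕ, a (k : ℤ) = ⌊β k⌋) (hfract : ∀ k, β k - ⌊β k⌋ ≠ 0) {D : ℤ → ℝ}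
    (hDm : D (-1) = -1) (hD0 : D 0 = β 0 - ⌊β 0⌋)
    (hDrec : ∀ k : ℕ, D (k + 1) = a (k + 1) * D k + D (k - 1)) (k : ℕ) :
    β (k + 1) * D k = -D (k - 1) := by
  induction k with
  | zero =>
    rw [Nat.cast_zero, zero_sub, hDm, hD0, hβ 0, neg_neg, one_div_mul_cancel (hfract 0)]
  | succ k ih =>
    have ha' : (a ((k : ℤ) + 1) : ℝ) = ⌊β (k + 1)⌋ := by rw [← Nat.cast_succ, ha]
    push_cast
    rw [add_sub_cancel_right, hDrec k, hβ (k + 1), ha', div_mul_eq_mul_div, one_mul,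
      div_eq_iff (hfract (k + 1))]
    linear_combination ih

theorem remainder_mul_convergent_error (hirr : Irrational α) (hβ0 : β 0 = α)
    (hβ : ∀ k : ℕ, β (k + 1) = 1 / (β k - ⌊β k⌋)) (ha : ∀ k : ℕ, a (k : ℤ) = ⌊β k⌋)
    (hqm : q (-1) = 0) (hq0 : q 0 = 1) (hpm : p (-1) = 1) (hp0 : p 0 = a 0)
    (hqrec : ∀ k : ℤ, 0 ≤ k → q (k + 1) = a (k + 1) * q k + q (k - 1))
    (hprec : ∀ k : ℤ, 0 ≤ k → p (k + 1) = a (k + 1) * p k + p (k - 1)) (k : ℕ) :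
    β (k + 2) * (q (k + 1) * α - p (k + 1)) = -(q k * α - p k) := by
  have h := remainder_mul_eq_neg (D := fun k => q k * α - p k) hβ ha
    (fun k => (sub_floor_remainder_pos hirr hβ0 hβ k).ne') (by simp [hqm, hpm])
    (by rw [hq0, hp0, show a 0 = ⌊β 0⌋ from ha 0, hβ0]; push_cast; ring)
    (fun k => by rw [hqrec k k.cast_nonneg, hprec k k.cast_nonneg]; push_cast; ring) (k + 1)
  push_cast at h
  rwa [add_sub_cancel_right] at h

end ContinuedFraction

theorem mul_nonpos_and_abs_le_of_mul_eq_neg {c x y : ℝ} (hc : 1 ≤ c) (h : c * y = -x) :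
    x * y ≤ 0 ∧ |y| ≤ |x| := by
  rw [← neg_neg x, ← h, abs_neg, abs_mul, abs_of_pos (by linarith : 0 < c)]
  exact ⟨by nlinarith [sq_nonneg y], le_mul_of_one_le_left (abs_nonneg _) hc⟩

section Diophantine

variable (α : ℝ) {p q p' q' : ℤ}

theorem abs_le_abs_sub_of_lt_denom (hdet : IsUnit (p * q' - p' * q)) (hq : 0 ≤ q)
    (hsign : (q * α - p) * (q' * α - p') ≤ 0) {j m : ℤ} (hj : 0 < j) (hjq : j < q') :
    |q * α - p| ≤ |j * α - m| := by
  -- `(j, m) = x • (q, p) + y • (q', p')` with `x ≠ 0` and `x * y ≤ 0`, so both error terms of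
  -- `j * α - m` have the same sign.
  have he := Int.isUnit_mul_self hdet
  set x := (p * q' - p' * q) * (m * q' - j * p')
  set y := (p * q' - p' * q) * (j * p - m * q)
  have hxq : x * q + y * q' = j := by linear_combination j * he
  have hxp : x * p + y * p' = m := by linear_combination m * he
  have hrepr : j * α - m = x * (q * α - p) + y * (q' * α - p') := by
    rw [← hxq, ← hxp]; push_cast; ring
  have hx : x ≠ 0 := by
    rintro hx
    rw [hx, zero_mul, zero_add] at hxq
    rcases le_or_gt y 0 with hy | hy <;> nlinarith
  have hxy : x * y ≤ 0 := by
    by_contra! hxy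
    rcases pos_and_pos_or_neg_and_neg_of_mul_pos hxy with ⟨hx, hy⟩ | ⟨hx, hy⟩ <;> nlinarith
  have hx_abs : (1 : ℝ) ≤ |(x : ℝ)| := by exact_mod_cast Int.one_le_abs hx
  have hxyR : (x : ℝ) * y ≤ 0 := by exact_mod_cast hxy
  calc |q * α - p| ≤ |(x : ℝ)| * |q * α - p| := le_mul_of_one_le_left (abs_nonneg _) hx_abs
    _ = |x * (q * α - p)| := (abs_mul _ _).symm
    _ ≤ |j * α - m| := by
        rw [hrepr, ← sq_le_sq]
        nlinarith [mul_nonneg_of_nonpos_of_nonpos hxyR hsign]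

theorem one_div_two_mul_le_abs_sub (hdet : IsUnit (p * q' - p' * q)) (hq : 0 ≤ q)
    (hqq' : q ≤ q') (habs : |q' * α - p'| ≤ |q * α - p|) :
    1 / (2 * q') ≤ |q * α - p| := by
  have hdetR : |((p * q' - p' * q : ℤ) : ℝ)| = 1 := by
    rw [← Int.cast_abs, Int.isUnit_iff_abs_eq.1 hdet, Int.cast_one]
  have hqR : (0 : ℝ) ≤ q := by exact_mod_cast hq
  have hqq'R : (q : ℝ) ≤ q' := by exact_mod_cast hqq'
  have h : (1 : ℝ) ≤ 2 * q' * |q * α - p| :=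
    calc (1 : ℝ) = |q * (q' * α - p') - q' * (q * α - p)| := by
          rw [← hdetR]; push_cast; congr 1; ring
      _ ≤ q * |q' * α - p'| + q' * |q * α - p| := by
          refine (abs_sub _ _).trans_eq ?_
          rw [abs_mul, abs_mul, abs_of_nonneg hqR, abs_of_nonneg (hqR.trans hqq'R)]
      _ ≤ 2 * q' * |q * α - p| := by
          nlinarith [mul_le_mul hqq'R habs (abs_nonneg _) (hqR.trans hqq'R)]
  have hq'R : (0 : ℝ) < 2 * q' := pos_of_mul_pos_left (one_pos.trans_le h) (abs_nonneg _)
  rwa [div_le_iff₀ hq'R, mul_comm]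

end Diophantine

theorem le_abs_fract_sub_fract {α γ δ : ℝ} {N : ℕ}
    (h : ∀ j m : ℤ, 0 < j → j ≤ N → δ ≤ |j * α - m|) {n m : ℕ} (hn : n ≤ N) (hm : m ≤ N)
    (hnm : n ≠ m) : δ ≤ |Int.fract (n * α - γ) - Int.fract (m * α - γ)| := by
  wlog hmn : m < n generalizing n m
  · rw [abs_sub_comm]
    exact this hm hn hnm.symm (hnm.lt_or_gt.resolve_right hmn)
  have : Int.fract (n * α - γ) - Int.fract (m * α - γ)
      = ((n - m : ℤ) : ℝ) * α - (⌊n * α - γ⌋ - ⌊m * α - γ⌋ : ℤ) := by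
    simp only [Int.fract]; push_cast; ring
  rw [this]
  exact h _ _ (by omega) (by omega)

open Finset

section Separated

variable {ι : Type*} [DecidableEq ι] {S : Finset ι} {f : ι → ℝ} {δ : ℝ}

theorem card_sub_one_mul_le_of_separated
    (hsep : ∀ n ∈ S, ∀ m ∈ S, n ≠ m → δ ≤ |f n - f m|) {x y : ℝ}
    (hx : ∀ n ∈ S, x ≤ f n) (hy : ∀ n ∈ S, f n ≤ y) (hS : S.Nonempty) :
    ((#S : ℝ) - 1) * δ ≤ y - x := by
  induction S using Finset.induction_on_max_value f generalizing y with
  | empty => exact absurd hS Finset.not_nonempty_empty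
  | insert a s has hmax ih =>
    have hxa := hx a (mem_insert_self a s)
    have hya := hy a (mem_insert_self a s)
    rcases s.eq_empty_or_nonempty with rfl | hs
    · simpa using hxa.trans hya
    have hgap : ∀ n ∈ s, f n ≤ f a - δ := fun n hn => by
      have h := hsep a (mem_insert_self a s) n (mem_insert_of_mem hn) (by rintro rfl; exact has hn)
      rw [abs_of_nonneg (sub_nonneg.2 (hmax n hn))] at h
      linarith
    have := ih (fun n hn m hm => hsep n (mem_insert_of_mem hn) m (mem_insert_of_mem hm))
      (fun n hn => hx n (mem_insert_of_mem hn)) hgap hs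
    rw [card_insert_of_notMem has]
    push_cast
    linarith

theorem card_filter_lt_mul_le_of_separated
    (hsep : ∀ n ∈ S, ∀ m ∈ S, n ≠ m → δ ≤ |f n - f m|) {x : ℝ} (hx : ∀ n ∈ S, x ≤ f n)
    {n : ι} (hn : n ∈ S) :
    (#(S.filter (f · < f n)) : ℝ) * δ ≤ f n - x := by
  have hnotMem : n ∉ S.filter (f · < f n) := by simp
  have hsub : insert n (S.filter (f · < f n)) ⊆ S :=
    insert_subset hn (filter_subset _ _)
  have := card_sub_one_mul_le_of_separated (S := insert n (S.filter (f · < f n)))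
    (fun n hn m hm => hsep n (hsub hn) m (hsub hm)) (fun m hm => hx m (hsub hm))
    (y := f n) (fun m hm => by
      rcases mem_insert.1 hm with rfl | hm
      · rfl
      · exact (mem_filter.1 hm).2.le) (insert_nonempty _ _)
  rwa [card_insert_of_notMem hnotMem, Nat.cast_succ, add_sub_cancel_right] at this

theorem injOn_card_filter_lt (hf : Set.InjOn f S) :
    Set.InjOn (fun n => #(S.filter (f · < f n))) S := by
  have hlt : ∀ n ∈ S, ∀ m ∈ S, f n < f m → #(S.filter (f · < f n)) < #(S.filter (f · < f m)) :=
    fun n hn m hm hnm => card_lt_card <| ssubset_iff_of_subset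
      (fun l hl => mem_filter.2 ⟨(mem_filter.1 hl).1, (mem_filter.1 hl).2.trans hnm⟩) |>.2
      ⟨n, mem_filter.2 ⟨hn, hnm⟩, by simp⟩
  intro n hn m hm hr
  by_contra hne
  rcases (hf.ne hn hm hne).lt_or_gt with h | h
  · exact (hlt n hn m hm h).ne hr
  · exact (hlt m hm n hn h).ne' hr


theorem sum_one_div_rpow_le_of_separated {b : ℝ} (hb : 1 < b) (hδ : 0 < δ)
    (hsep : ∀ n ∈ S, ∀ m ∈ S, n ≠ m → δ ≤ |f n - f m|) {n₀ : ι} (hn₀ : n₀ ∈ S)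
    (hmin : ∀ n ∈ S, f n₀ ≤ f n) (hn₀_nonneg : 0 ≤ f n₀) :
    ∑ n ∈ S.erase n₀, 1 / f n ^ b ≤ (1 / δ) ^ b * ∑' j : ℕ, 1 / ((j : ℝ) + 1) ^ b := by
  set r : ι → ℕ := fun n => #(S.filter (f · < f n))
  have hf : Set.InjOn f S := fun n hn m hm h => by
    by_contra hne
    have := hsep n hn m hm hne
    rw [h, sub_self, abs_zero] at this
    linarith
  have hr_pos : ∀ n ∈ S.erase n₀, 1 ≤ r n := fun n hn => by
    obtain ⟨hne, hn⟩ := mem_erase.1 hn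
    exact card_pos.2 ⟨n₀, mem_filter.2 ⟨hn₀, (hmin n hn).lt_of_ne (hf.ne hn₀ hn hne.symm)⟩⟩
  have hterm : ∀ n ∈ S.erase n₀, 1 / f n ^ b ≤ (1 / δ) ^ b * (1 / (r n : ℝ) ^ b) := fun n hn => by
    have hrδ := card_filter_lt_mul_le_of_separated hsep hmin (mem_of_mem_erase hn)
    have hrδ_pos : 0 < (r n : ℝ) * δ := mul_pos (by exact_mod_cast hr_pos n hn) hδ
    calc 1 / f n ^ b ≤ 1 / ((r n : ℝ) * δ) ^ b :=
          one_div_le_one_div_of_le (by positivity) (by gcongr; linarith)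
      _ = (1 / δ) ^ b * (1 / (r n : ℝ) ^ b) := by
          rw [Real.mul_rpow (Nat.cast_nonneg _) hδ.le, Real.div_rpow zero_le_one hδ.le,
            Real.one_rpow]
          ring
  have hζ : Summable fun i : ℕ => 1 / (i : ℝ) ^ b := Real.summable_one_div_nat_rpow.2 hb
  calc ∑ n ∈ S.erase n₀, 1 / f n ^ b
      ≤ ∑ n ∈ S.erase n₀, (1 / δ) ^ b * (1 / (r n : ℝ) ^ b) := sum_le_sum hterm
    _ = (1 / δ) ^ b * ∑ i ∈ (S.erase n₀).image r, 1 / (i : ℝ) ^ b := by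
        rw [mul_sum, sum_image ((injOn_card_filter_lt hf).mono (erase_subset _ _))]
    _ ≤ (1 / δ) ^ b * ∑' i : ℕ, 1 / (i : ℝ) ^ b := by
        gcongr
        exact hζ.sum_le_tsum _ fun i _ => by positivity
    _ = (1 / δ) ^ b * ∑' j : ℕ, 1 / ((j : ℝ) + 1) ^ b := by
        -- the `i = 0` term is `1 / 0 ^ b = 0`
        rw [hζ.tsum_eq_zero_add]
        simp [Real.zero_rpow (by linarith : b ≠ 0)]

end Separated

theorem stmt_18_general
    (α : ℝ) (hirr : Irrational α)
    (a p q : ℤ → ℤ) (β : ℕ → ℝ)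
    (hβ0 : β 0 = α)
    (hβ : ∀ k : ℕ, β (k + 1) = 1 / (β k - ⌊β k⌋))
    (ha : ∀ k : ℕ, a (k : ℤ) = ⌊β k⌋)
    (hqm : q (-1) = 0) (hq0 : q 0 = 1)
    (hpm : p (-1) = 1) (hp0 : p 0 = a 0)
    (hqrec : ∀ k : ℤ, 0 ≤ k → q (k + 1) = a (k + 1) * q k + q (k - 1))
    (hprec : ∀ k : ℤ, 0 ≤ k → p (k + 1) = a (k + 1) * p k + p (k - 1))
    (N : ℕ) (K : ℕ)
    (hKmax : ∀ j : ℕ, q (j : ℤ) ≤ (N : ℤ) → j ≤ K)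
    (γ : ℝ) (n' : ℕ) (hn'le : n' ≤ N)
    (hmin : ∀ m : ℕ, m ≤ N → Int.fract ((n' : ℝ) * α - γ) ≤ Int.fract ((m : ℝ) * α - γ))
    (b : ℝ) (hb : 1 < b) :
    ∑ n ∈ (Finset.range (N + 1)).erase n', 1 / Int.fract ((n : ℝ) * α - γ) ^ b ≤
      2 ^ (1 + b) * (∑' j : ℕ, 1 / ((j : ℝ) + 1) ^ b) * (N : ℝ) ^ b +
        2 ^ b * (∑' j : ℕ, 1 / ((j : ℝ) + 1) ^ b) * (q ((K : ℤ) + 1) : ℝ) ^ b := by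
  obtain ⟨hsign, habs⟩ := mul_nonpos_and_abs_le_of_mul_eq_neg
    (one_lt_remainder_succ hirr hβ0 hβ (K + 1)).le
    (remainder_mul_convergent_error hirr hβ0 hβ ha hqm hq0 hpm hp0 hqrec hprec K)
  obtain ⟨hq, hqq⟩ :=
    denom_nonneg_and_le_succ (one_le_partialQuotient_succ hirr hβ0 hβ ha) hqm hq0 hqrec K
  have hdet : IsUnit (p K * q (K + 1) - p (K + 1) * q K) := by
    rw [convergent_det hqm hq0 hpm hqrec hprec K]
    exact isUnit_neg_one.pow _
  have hNq : (N : ℤ) < q (K + 1) := by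
    by_contra! h
    exact (hKmax (K + 1) (by exact_mod_cast h)).not_gt K.lt_succ_self
  have hq_pos : (0 : ℝ) < q (K + 1) := by exact_mod_cast (by omega : 0 < q (K + 1))
  have hsep : ∀ n ∈ range (N + 1), ∀ m ∈ range (N + 1), n ≠ m → 1 / (2 * (q (K + 1) : ℝ)) ≤
      |Int.fract ((n : ℝ) * α - γ) - Int.fract ((m : ℝ) * α - γ)| :=
    fun n hn m hm hnm => le_abs_fract_sub_fract
      (fun j m hj hjN => (one_div_two_mul_le_abs_sub α hdet hq hqq habs).trans
        (abs_le_abs_sub_of_lt_denom α hdet hq hsign hj (by omega)))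
      (Nat.lt_succ_iff.1 (mem_range.1 hn)) (Nat.lt_succ_iff.1 (mem_range.1 hm)) hnm
  calc _ ≤ (1 / (1 / (2 * (q (K + 1) : ℝ)))) ^ b * ∑' j : ℕ, 1 / ((j : ℝ) + 1) ^ b :=
        sum_one_div_rpow_le_of_separated hb (by positivity) hsep
          (mem_range.2 (Nat.lt_succ_of_le hn'le))
          (fun m hm => hmin m (Nat.lt_succ_iff.1 (mem_range.1 hm))) (Int.fract_nonneg _)
    _ = 2 ^ b * (∑' j : ℕ, 1 / ((j : ℝ) + 1) ^ b) * (q (K + 1) : ℝ) ^ b := by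
        rw [one_div_one_div, Real.mul_rpow zero_le_two hq_pos.le]
        ring
    _ ≤ _ := le_add_of_nonneg_left (by positivity)

/-- Generalized sum with exponent b > 1:
∑_{0 ≤ n ≤ N, n ≠ n'} 1/{nα - γ}^b ≤ 2^{1+b} ζ(b) N^b + 2^b ζ(b) q_{K+1}^b,
where ζ(b) = ∑_{j ≥ 1} j^{-b}. -/
theorem stmt_18
    (α : ℝ) (hirr : Irrational α)
    (a p q : ℤ → ℤ) (β : ℕ → ℝ)
    (hβ0 : β 0 = α)
    (hβ : ∀ k : ℕ, β (k + 1) = 1 / (β k - ⌊β k⌋))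
    (ha : ∀ k : ℕ, a (k : ℤ) = ⌊β k⌋)
    (hqm : q (-1) = 0) (hq0 : q 0 = 1)
    (hpm : p (-1) = 1) (hp0 : p 0 = a 0)
    (hqrec : ∀ k : ℤ, 0 ≤ k → q (k + 1) = a (k + 1) * q k + q (k - 1))
    (hprec : ∀ k : ℤ, 0 ≤ k → p (k + 1) = a (k + 1) * p k + p (k - 1))
    (D : ℤ → ℝ) (hD : ∀ k : ℤ, D k = (q k : ℝ) * α - (p k : ℝ))
    (N : ℕ) (hN1 : 1 ≤ N) (K : ℕ)
    (hK : q (K : ℤ) ≤ (N : ℤ)) (hKmax : ∀ j : ℕ, q (j : ℤ) ≤ (N : ℤ) → j ≤ K)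
    (γ : ℝ) (n' : ℕ) (hn'le : n' ≤ N)
    (hmin : ∀ m : ℕ, m ≤ N → Int.fract ((n' : ℝ) * α - γ) ≤ Int.fract ((m : ℝ) * α - γ))
    (b : ℝ) (hb : 1 < b) :
    ∑ n ∈ (Finset.range (N + 1)).erase n', 1 / Int.fract ((n : ℝ) * α - γ) ^ b ≤
      2 ^ (1 + b) * (∑' j : ℕ, 1 / ((j : ℝ) + 1) ^ b) * (N : ℝ) ^ b +
        2 ^ b * (∑' j : ℕ, 1 / ((j : ℝ) + 1) ^ b) * (q ((K : ℤ) + 1) : ℝ) ^ b :=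
  stmt_18_general α hirr a p q β hβ0 hβ ha hqm hq0 hpm hp0 hqrec hprec N K hKmax γ n' hn'le hmin b
    hb
end
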